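/- arXiv:1505.01655 — 3 statements merged into one kernel-verified Lean document; each statement's English description precedes it below -/
import Mathlib

section
/- Let 𝔤 be a finite-dimensional real Lie algebra with Chevalley–Eilenberg differential d, let I ⊆ ℝ be an open interval containing 0, and let ω : I → Λ²𝔤* and ψ₊ : I → Λ³𝔤* be differentiable families of forms satisfying the first Hitchin flow equation (d/dt)ψ₊(t) = d(ω(t)) for all t ∈ I. If there is a continuous function c : I → ℝ with d(ω(t)) = c(t)·ψ₊(t) for all t ∈ I (i.e., the solution is coupled), then ψ₊(t) = f(t)·ψ₊(0) for all t ∈ I, where f(t) = exp(∫₀ᵗ c(s) ds). -/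
noncomputable section

open scoped TensorProduct

/-- `Form V k` is the space of (real-valued) k-forms on `V`, i.e. alternating
k-linear maps `V × ⋯ × V → ℝ`. -/
abbrev Form (V : Type*) [AddCommGroup V] [Module ℝ V] (k : ℕ) :=
  V [⋀^Fin k]→ₗ[ℝ] ℝ

/-- Wedge product of alternating forms (determinant/shuffle convention, so that
`(e¹ ∧ e²)(e₁, e₂) = 1`). -/
noncomputable def wedge {V : Type*} [AddCommGroup V] [Module ℝ V] {k l : ℕ}
    (f : Form V k) (g : Form V l) : Form V (k + l) :=
  ((TensorProduct.lid ℝ ℝ).toLinearMap.compAlternatingMap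
    (f.domCoprod g)).domDomCongr finSumFinEquiv
/-- The Chevalley–Eilenberg differential of a 2-form, as a function of three vectors:
`dα(x,y,z) = −α([x,y],z) + α([x,z],y) − α([y,z],x)`. -/
def d2 {𝔤 : Type*} [LieRing 𝔤] [LieAlgebra ℝ 𝔤] (α : Form 𝔤 2) (x y z : 𝔤) : ℝ :=
  -α ![⁅x, y⁆, z] + α ![⁅x, z⁆, y] - α ![⁅y, z⁆, x]

/-- The Chevalley–Eilenberg differential of a 3-form, as a function of four vectors. -/
def d3 {𝔤 : Type*} [LieRing 𝔤] [LieAlgebra ℝ 𝔤] (α : Form 𝔤 3) (x y z w : 𝔤) : ℝ :=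
  -α ![⁅x, y⁆, z, w] + α ![⁅x, z⁆, y, w] - α ![⁅x, w⁆, y, z]
    - α ![⁅y, z⁆, x, w] + α ![⁅y, w⁆, x, z] - α ![⁅z, w⁆, x, y]

/-! Evaluated on a fixed triple of vectors, the coupled flow becomes the scalar linear ODE
`y' = c y`, whose solutions are `exp (∫ c)` times their initial value: `exp (-∫ c) * y` has
zero derivative, hence is constant on the interval. -/

open Real

section LinearODE

variable {I : Set ℝ} {a : ℝ} {c : ℝ → ℝ}

theorem hasDerivAt_intervalIntegral_of_continuousOn (hIopen : IsOpen I) (hI : Convex ℝ I)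
    (ha : a ∈ I) (hc : ContinuousOn c I) {t : ℝ} (ht : t ∈ I) :
    HasDerivAt (fun u => ∫ s in a..u, c s) (c t) t :=
  intervalIntegral.integral_hasDerivAt_right
    (hc.mono (hI.ordConnected.uIcc_subset ha ht)).intervalIntegrable
    (hc.stronglyMeasurableAtFilter hIopen t ht) (hc.continuousAt (hIopen.mem_nhds ht))

theorem eq_exp_integral_mul_of_hasDerivAt_mul (hIopen : IsOpen I) (hI : Convex ℝ I)
    (ha : a ∈ I) (hc : ContinuousOn c I) {y : ℝ → ℝ}
    (hy : ∀ t ∈ I, HasDerivAt y (c t * y t) t) {t : ℝ} (ht : t ∈ I) :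
    y t = exp (∫ s in a..t, c s) * y a := by
  set F : ℝ → ℝ := fun u => ∫ s in a..u, c s
  have hderiv : ∀ u ∈ I, HasDerivAt (fun s => exp (-F s) * y s) 0 u := fun u hu => by
    refine (((hasDerivAt_intervalIntegral_of_continuousOn hIopen hI ha hc hu).neg.exp).mul
      (hy u hu)).congr_deriv ?_
    ring
  have hconst : exp (-F t) * y t = exp (-F a) * y a :=
    hIopen.is_const_of_deriv_eq_zero hI.isPreconnected
      (fun u hu => (hderiv u hu).differentiableAt.differentiableWithinAt)
      (fun u hu => (hderiv u hu).deriv) ht ha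
  have hFa : F a = 0 := intervalIntegral.integral_same
  rw [hFa, neg_zero, exp_zero, one_mul, exp_neg] at hconst
  rw [← hconst, ← mul_assoc, mul_inv_cancel₀ (exp_ne_zero _), one_mul]

end LinearODE

theorem AlternatingMap.ext_three {R M N : Type*} [Semiring R] [AddCommMonoid M] [Module R M]
    [AddCommMonoid N] [Module R N] {f g : M [⋀^Fin 3]→ₗ[R] N}
    (h : ∀ x y z, f ![x, y, z] = g ![x, y, z]) : f = g := by
  ext v
  have hv : v = ![v 0, v 1, v 2] := by
    ext i; fin_cases i <;> rfl
  rw [hv, h]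

theorem statement0_general {𝔤 : Type*} [LieRing 𝔤] [LieAlgebra ℝ 𝔤]
    {I : Set ℝ} (hIopen : IsOpen I) (hIinterval : Convex ℝ I) (h0I : (0 : ℝ) ∈ I)
    (ω : ℝ → Form 𝔤 2) (ψp : ℝ → Form 𝔤 3)
    (hflow : ∀ t ∈ I, ∀ x y z : 𝔤,
      HasDerivAt (fun s => ψp s ![x, y, z]) (d2 (ω t) x y z) t)
    (c : ℝ → ℝ) (hc : ContinuousOn c I)
    (hcoupled : ∀ t ∈ I, ∀ x y z : 𝔤, d2 (ω t) x y z = c t * ψp t ![x, y, z]) :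
    ∀ t ∈ I, ψp t = Real.exp (∫ s in (0 : ℝ)..t, c s) • ψp 0 := by
  intro t ht
  refine AlternatingMap.ext_three fun x y z => ?_
  have hlinear : ∀ u ∈ I, HasDerivAt (fun s => ψp s ![x, y, z]) (c u * ψp u ![x, y, z]) u :=
    fun u hu => hcoupled u hu x y z ▸ hflow u hu x y z
  exact eq_exp_integral_mul_of_hasDerivAt_mul hIopen hIinterval h0I hc hlinear ht

/-- Let `𝔤` be a finite-dimensional real Lie algebra, `I ⊆ ℝ` an open
interval containing `0`, and let `ω : I → Λ²𝔤*`, `ψ₊ : I → Λ³𝔤*` be differentiable families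
of forms satisfying the first Hitchin flow equation `(d/dt)ψ₊(t) = d(ω(t))` on `I`.
If `d(ω(t)) = c(t) ψ₊(t)` on `I` for a continuous `c : I → ℝ` (the solution is coupled),
then `ψ₊(t) = f(t) ψ₊(0)` for all `t ∈ I`, where `f(t) = exp(∫₀ᵗ c(s) ds)`. -/
theorem statement0 {𝔤 : Type*} [LieRing 𝔤] [LieAlgebra ℝ 𝔤] [FiniteDimensional ℝ 𝔤]
    {I : Set ℝ} (hIopen : IsOpen I) (hIinterval : Convex ℝ I) (h0I : (0 : ℝ) ∈ I)
    (ω : ℝ → Form 𝔤 2) (ψp : ℝ → Form 𝔤 3)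
    (hflow : ∀ t ∈ I, ∀ x y z : 𝔤,
      HasDerivAt (fun s => ψp s ![x, y, z]) (d2 (ω t) x y z) t)
    (c : ℝ → ℝ) (hc : ContinuousOn c I)
    (hcoupled : ∀ t ∈ I, ∀ x y z : 𝔤, d2 (ω t) x y z = c t * ψp t ![x, y, z]) :
    ∀ t ∈ I, ψp t = Real.exp (∫ s in (0 : ℝ)..t, c s) • ψp 0 :=
  statement0_general hIopen hIinterval h0I ω ψp hflow c hc hcoupled
end
end

section
/- Let 𝔤 be a finite-dimensional real Lie algebra with Chevalley–Eilenberg differential d and I ⊆ ℝ an open interval containing 0. Let ω : I → Λ²𝔤* and ψ : I → Λ³𝔤* be differentiable, w₂ : I → Λ²𝔤* continuous, c : I → ℝ differentiable and s : I → ℝ continuous, and suppose that for all t ∈ I: (d/dt)ω(t) = (2/3)c(t)·ω(t) + w₂(t), (d/dt)ψ(t) = c(t)·ψ(t), d(w₂(t)) = −(1/4)s(t)·ψ(t), and c'(t) = −(1/3)c(t)² − (1/4)s(t). If d(ω(0)) = c(0)·ψ(0), then d(ω(t)) = c(t)·ψ(t) for every t ∈ I; that is, a solution of this flow system starting from a coupled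 structure stays coupled as long as it exists. -/
/-!
Fix vectors `x y z` and put `f(t) = dω(t)(x,y,z) - c(t) ψ(t)(x,y,z)`. Differentiating with
the flow equations, the `w₂` and `s` contributions cancel through `d w₂ = -(1/4) s ψ` and the
Riccati equation for `c`, leaving the scalar linear equation `f' = (2/3) c f`. Its solution
`f(t) = f(0) exp(∫₀ᵗ (2/3) c)` vanishes identically because `f(0) = 0`.
-/

noncomputable section

open scoped TensorProduct

open Set

section LinearODE

variable {I : Set ℝ} {a : ℝ → ℝ}

theorem ContinuousOn.hasDerivAt_intervalIntegral (hI : IsOpen I) (hIc : Convex ℝ I)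
    (ha : ContinuousOn a I) {t₀ t : ℝ} (ht₀ : t₀ ∈ I) (ht : t ∈ I) :
    HasDerivAt (fun u => ∫ v in t₀..u, a v) (a t) t :=
  intervalIntegral.integral_hasDerivAt_right
    ((ha.mono (hIc.ordConnected.uIcc_subset ht₀ ht)).intervalIntegrable)
    (ha.stronglyMeasurableAtFilter hI t ht) (ha.continuousAt (hI.mem_nhds ht))

theorem eqOn_zero_of_hasDerivAt_eq_mul_self (hI : IsOpen I) (hIc : Convex ℝ I)
    (ha : ContinuousOn a I) {f : ℝ → ℝ} (hf : ∀ t ∈ I, HasDerivAt f (a t * f t) t)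
    {t₀ : ℝ} (ht₀ : t₀ ∈ I) (hf₀ : f t₀ = 0) : EqOn f 0 I := by
  set F : ℝ → ℝ := fun u => Real.exp (-∫ v in t₀..u, a v) * f u
  have hF : ∀ t ∈ I, HasDerivAt F 0 t := fun t ht => by
    have hA := ha.hasDerivAt_intervalIntegral hI hIc ht₀ ht
    refine (hA.neg.exp.mul (hf t ht)).congr_deriv ?_
    ring
  have hF_const : ∀ t ∈ I, F t = F t₀ := fun t ht =>
    hI.is_const_of_deriv_eq_zero hIc.isPreconnected
      (fun u hu => (hF u hu).differentiableAt.differentiableWithinAt)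
      (fun u hu => (hF u hu).deriv) ht ht₀
  intro t ht
  have hFt : Real.exp (-∫ v in t₀..t, a v) * f t = 0 := by
    simpa [F, hf₀] using hF_const t ht
  exact (mul_eq_zero.mp hFt).resolve_left (Real.exp_ne_zero _)

end LinearODE

section ChevalleyEilenberg

variable {𝔤 : Type*} [LieRing 𝔤] [LieAlgebra ℝ 𝔤]

theorem d2_add (α β : Form 𝔤 2) (x y z : 𝔤) :
    d2 (α + β) x y z = d2 α x y z + d2 β x y z := by
  simp only [d2, AlternatingMap.add_apply]
  ring

theorem d2_smul (r : ℝ) (α : Form 𝔤 2) (x y z : 𝔤) :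
    d2 (r • α) x y z = r * d2 α x y z := by
  simp only [d2, AlternatingMap.smul_apply, smul_eq_mul]
  ring

theorem hasDerivAt_d2 {ω : ℝ → Form 𝔤 2} {α : Form 𝔤 2} {t : ℝ}
    (h : ∀ x y : 𝔤, HasDerivAt (fun u => ω u ![x, y]) (α ![x, y]) t) (x y z : 𝔤) :
    HasDerivAt (fun u => d2 (ω u) x y z) (d2 α x y z) t :=
  (((h _ _).neg.add (h _ _)).sub (h _ _))

end ChevalleyEilenberg

theorem statement5_general {𝔤 : Type*} [LieRing 𝔤] [LieAlgebra ℝ 𝔤]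
    {I : Set ℝ} (hIopen : IsOpen I) (hIinterval : Convex ℝ I) (h0I : (0 : ℝ) ∈ I)
    (ω w₂ : ℝ → Form 𝔤 2) (ψ : ℝ → Form 𝔤 3) (c s : ℝ → ℝ)
    (hω : ∀ t ∈ I, ∀ x y : 𝔤, HasDerivAt (fun u => ω u ![x, y])
      ((2 / 3 : ℝ) * c t * ω t ![x, y] + w₂ t ![x, y]) t)
    (hψ : ∀ t ∈ I, ∀ x y z : 𝔤, HasDerivAt (fun u => ψ u ![x, y, z])
      (c t * ψ t ![x, y, z]) t)
    (hdw₂ : ∀ t ∈ I, ∀ x y z : 𝔤, d2 (w₂ t) x y z = -(1 / 4 : ℝ) * s t * ψ t ![x, y, z])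
    (hc : ∀ t ∈ I, HasDerivAt c (-(1 / 3 : ℝ) * (c t) ^ 2 - (1 / 4 : ℝ) * s t) t)
    (hinit : ∀ x y z : 𝔤, d2 (ω 0) x y z = c 0 * ψ 0 ![x, y, z]) :
    ∀ t ∈ I, ∀ x y z : 𝔤, d2 (ω t) x y z = c t * ψ t ![x, y, z] := by
  intro t ht x y z
  have hc_cont : ContinuousOn (fun u => (2 / 3 : ℝ) * c u) I := fun u hu =>
    (continuousAt_const.mul (hc u hu).continuousAt).continuousWithinAt
  have hdω : ∀ u ∈ I, HasDerivAt (fun v => d2 (ω v) x y z)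
      (d2 (((2 / 3 : ℝ) * c u) • ω u + w₂ u) x y z) u := fun u hu =>
    hasDerivAt_d2 (fun x y => by simpa [mul_assoc] using hω u hu x y) x y z
  have hdefect : ∀ u ∈ I, HasDerivAt (fun v => d2 (ω v) x y z - c v * ψ v ![x, y, z])
      ((2 / 3 : ℝ) * c u * (d2 (ω u) x y z - c u * ψ u ![x, y, z])) u := fun u hu => by
    refine ((hdω u hu).sub ((hc u hu).mul (hψ u hu x y z))).congr_deriv ?_
    rw [d2_add, d2_smul, hdw₂ u hu]
    ring
  exact sub_eq_zero.mp <| eqOn_zero_of_hasDerivAt_eq_mul_self hIopen hIinterval hc_cont hdefect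
    h0I (sub_eq_zero.mpr (hinit x y z)) ht

/-- Let `𝔤` be a finite-dimensional real Lie algebra, `I ∋ 0` an open
interval, `ω, ψ` differentiable families of 2- resp. 3-forms, `w₂` a continuous family of
2-forms, `c` differentiable and `s` continuous, satisfying on `I` the flow system
`ω' = (2/3) c ω + w₂`, `ψ' = c ψ`, `d w₂ = −(1/4) s ψ`, `c' = −(1/3) c² − (1/4) s`.
If `dω(0) = c(0) ψ(0)`, then `dω(t) = c(t) ψ(t)` for every `t ∈ I`: a solution starting
from a coupled structure stays coupled as long as it exists. -/
theorem statement5 {𝔤 : Type*} [LieRing 𝔤] [LieAlgebra ℝ 𝔤] [FiniteDimensional ℝ 𝔤]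
    {I : Set ℝ} (hIopen : IsOpen I) (hIinterval : Convex ℝ I) (h0I : (0 : ℝ) ∈ I)
    (ω w₂ : ℝ → Form 𝔤 2) (ψ : ℝ → Form 𝔤 3) (c s : ℝ → ℝ)
    (hω : ∀ t ∈ I, ∀ x y : 𝔤, HasDerivAt (fun u => ω u ![x, y])
      ((2 / 3 : ℝ) * c t * ω t ![x, y] + w₂ t ![x, y]) t)
    (hψ : ∀ t ∈ I, ∀ x y z : 𝔤, HasDerivAt (fun u => ψ u ![x, y, z])
      (c t * ψ t ![x, y, z]) t)
    (hw₂cont : ∀ x y : 𝔤, ContinuousOn (fun t => w₂ t ![x, y]) I)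
    (hscont : ContinuousOn s I)
    (hdw₂ : ∀ t ∈ I, ∀ x y z : 𝔤, d2 (w₂ t) x y z = -(1 / 4 : ℝ) * s t * ψ t ![x, y, z])
    (hc : ∀ t ∈ I, HasDerivAt c (-(1 / 3 : ℝ) * (c t) ^ 2 - (1 / 4 : ℝ) * s t) t)
    (hinit : ∀ x y z : 𝔤, d2 (ω 0) x y z = c 0 * ψ 0 ![x, y, z]) :
    ∀ t ∈ I, ∀ x y z : 𝔤, d2 (ω t) x y z = c t * ψ t ![x, y, z] :=
  statement5_general hIopen hIinterval h0I ω w₂ ψ c s hω hψ hdw₂ hc hinit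
end
end

section
/- On the Iwasawa Lie algebra 𝔦, set ω₀ := e¹²+e³⁴+e⁵⁶, ψ₊₀ := e¹³⁵−e¹⁴⁶−e²³⁶−e²⁴⁵, ψ₋₀ := e¹³⁶+e¹⁴⁵+e²³⁵−e²⁴⁶. Then (ω₀, ψ₊₀) is a coupled SU(3)-structure on 𝔦 with d(ω₀) = −ψ₊₀ (coupled constant c = −1), its associated 3-form is ψ₋₀, the 2-form w₂ := −(4/3)e¹² − (4/3)e³⁴ + (8/3)e⁵⁶ is a torsion form for it (i.e., w₂∧ω₀∧ω₀ = 0, w₂(J_{ψ₊₀}x, J_{ψ₊₀}y) = w₂(x,y), and d(ψ₋₀) = (2/3)ω₀∧ω₀ − w₂∧ω₀), and d(w₂) = −(8/3)ψ₊₀, so d(w₂) is proportional to ψ₊₀ with factor −(1/4)|w₂|² = −8/3. -/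
noncomputable section

open scoped TensorProduct

/-- `λ(K) = (1/6) tr(K²)`. -/
def lamOf {V : Type*} [AddCommGroup V] [Module ℝ V] (K : V →ₗ[ℝ] V) : ℝ :=
  (1 / 6 : ℝ) * LinearMap.trace ℝ V (K ∘ₗ K)

/-- `J = −K / √(−λ(K))`. -/
def Jof {V : Type*} [AddCommGroup V] [Module ℝ V] (K : V →ₗ[ℝ] V) : V →ₗ[ℝ] V :=
  (-(Real.sqrt (-lamOf K))⁻¹) • K

/-- `K` is the endomorphism associated with the 3-form `ψ` via the volume form
`Ω = (1/6) ω³`, i.e. `i_{K v} Ω = (i_v ψ) ∧ ψ` for all `v`. -/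
def IsKOf {V : Type*} [AddCommGroup V] [Module ℝ V]
    (ω : Form V 2) (ψ : Form V 3) (K : V →ₗ[ℝ] V) : Prop :=
  ∀ v : V, ((1 / 6 : ℝ) • wedge (wedge ω ω) ω).curryLeft (K v)
    = wedge (ψ.curryLeft v) ψ

/-- An SU(3)-structure `(ω, ψp)` on `V`, with associated almost complex structure `J`
and associated 3-form `ψm` (so that `Ψ = ψp + i ψm` and `ψm(x,y,z) = −ψp(Jx,y,z)`):
`ω³ ≠ 0`, `λ(ψp) < 0`, `ω ∧ ψp = 0`, `h(x,y) := ω(x,Jy)` is symmetric and positive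
definite, and `ψp ∧ ψm = (2/3) ω³`. -/
structure IsSU3 {V : Type*} [AddCommGroup V] [Module ℝ V]
    (ω : Form V 2) (ψp ψm : Form V 3) (J : V →ₗ[ℝ] V) : Prop where
  vol_ne : wedge (wedge ω ω) ω ≠ 0
  hJ : ∃ K : V →ₗ[ℝ] V, IsKOf ω ψp K ∧ lamOf K < 0 ∧ J = Jof K
  hψm : ∀ x y z : V, ψm ![x, y, z] = -ψp ![J x, y, z]
  compat : wedge ω ψp = 0
  h_symm : ∀ x y : V, ω ![x, J y] = ω ![y, J x]
  h_posdef : ∀ x : V, x ≠ 0 → 0 < ω ![x, J x]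
  normalized : wedge ψp ψm = (2 / 3 : ℝ) • wedge (wedge ω ω) ω

/-- A coupled SU(3)-structure with coupled constant `c ≠ 0`: `dω = c ψ₊`. -/
structure IsCoupledSU3 {𝔤 : Type*} [LieRing 𝔤] [LieAlgebra ℝ 𝔤]
    (ω : Form 𝔤 2) (ψp ψm : Form 𝔤 3) (J : 𝔤 →ₗ[ℝ] 𝔤) (c : ℝ) : Prop where
  toIsSU3 : IsSU3 ω ψp ψm J
  c_ne : c ≠ 0
  coupled : ∀ x y z : 𝔤, d2 ω x y z = c * ψp ![x, y, z]

/-- `w₂` is a torsion form for the coupled SU(3)-structure `(ω, ψp)` with coupled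
constant `c`: it is primitive (`w₂ ∧ ω² = 0`), of type (1,1) (`w₂(J·,J·) = w₂`), and
`dψ₋ = −(2/3) c ω² − w₂ ∧ ω`. -/
structure IsTorsionForm {𝔤 : Type*} [LieRing 𝔤] [LieAlgebra ℝ 𝔤]
    (ω : Form 𝔤 2) (ψp ψm : Form 𝔤 3) (J : 𝔤 →ₗ[ℝ] 𝔤) (c : ℝ) (w₂ : Form 𝔤 2) : Prop where
  primitive : wedge (wedge w₂ ω) ω = 0
  type11 : ∀ x y : 𝔤, w₂ ![J x, J y] = w₂ ![x, y]
  dψm : ∀ x y z w : 𝔤, d3 ψm x y z w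
    = -(2 / 3 : ℝ) * c * wedge ω ω ![x, y, z, w] - wedge w₂ ω ![x, y, z, w]
section VecEval
variable {α : Type*} (a b c d e f : α)
lemma vmk0 : ![a, b, c, d, e, f] ⟨0, by omega⟩ = a := rfl
lemma vmk1 : ![a, b, c, d, e, f] ⟨1, by omega⟩ = b := rfl
lemma vmk2 : ![a, b, c, d, e, f] ⟨2, by omega⟩ = c := rfl
lemma vmk3 : ![a, b, c, d, e, f] ⟨3, by omega⟩ = d := rfl
lemma vmk4 : ![a, b, c, d, e, f] ⟨4, by omega⟩ = e := rfl
lemma vmk5 : ![a, b, c, d, e, f] ⟨5, by omega⟩ = f := rfl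
end VecEval
/-- The underlying type of the Iwasawa Lie algebra: `ℝ⁶` with coordinates indexed by `Fin 6`. -/
def Iw : Type := Fin 6 → ℝ

instance : AddCommGroup Iw := inferInstanceAs (AddCommGroup (Fin 6 → ℝ))
instance : Module ℝ Iw := inferInstanceAs (Module ℝ (Fin 6 → ℝ))

/-- The bracket of the Iwasawa Lie algebra: with `e₁, …, e₆` the standard basis
(0-indexed as `e 0, …, e 5`), the only nonzero brackets are
`[e₁,e₄] = −e₅`, `[e₂,e₃] = −e₅`, `[e₁,e₃] = −e₆`, `[e₂,e₄] = e₆`;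
equivalently `de⁵ = e¹⁴ + e²³`, `de⁶ = e¹³ − e²⁴`. -/
def iwBr (x y : Iw) : Iw :=
  ![0, 0, 0, 0,
    -(x 0 * y 3 - x 3 * y 0) - (x 1 * y 2 - x 2 * y 1),
    -(x 0 * y 2 - x 2 * y 0) + (x 1 * y 3 - x 3 * y 1)]

instance : Bracket Iw Iw := ⟨iwBr⟩

instance : LieRing Iw where
  add_lie x y z := by
    show iwBr (x + y) z = iwBr x z + iwBr y z
    have hadd : ∀ (a b : Iw) (j : Fin 6), (a + b) j = a j + b j := fun _ _ _ => rfl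
    funext i
    rw [hadd]
    fin_cases i <;>
      simp only [iwBr, hadd, vmk0, vmk1, vmk2, vmk3, vmk4, vmk5] <;> ring
  lie_add x y z := by
    show iwBr x (y + z) = iwBr x y + iwBr x z
    have hadd : ∀ (a b : Iw) (j : Fin 6), (a + b) j = a j + b j := fun _ _ _ => rfl
    funext i
    rw [hadd]
    fin_cases i <;>
      simp only [iwBr, hadd, vmk0, vmk1, vmk2, vmk3, vmk4, vmk5] <;> ring
  lie_self x := by
    show iwBr x x = 0
    have h0 : ∀ j : Fin 6, (0 : Iw) j = 0 := fun _ => rfl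
    funext i
    fin_cases i <;>
      simp only [iwBr, h0, vmk0, vmk1, vmk2, vmk3, vmk4, vmk5] <;> ring
  leibniz_lie x y z := by
    show iwBr x (iwBr y z) = iwBr (iwBr x y) z + iwBr y (iwBr x z)
    have hadd : ∀ (a b : Iw) (j : Fin 6), (a + b) j = a j + b j := fun _ _ _ => rfl
    funext i
    rw [hadd]
    fin_cases i <;>
      simp only [iwBr, hadd, vmk0, vmk1, vmk2, vmk3, vmk4, vmk5,
        Matrix.cons_val_zero, Matrix.cons_val_one, Matrix.head_cons,
        Matrix.cons_val_two, Matrix.cons_val_three, Matrix.tail_cons] <;> ring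

instance : LieAlgebra ℝ Iw where
  lie_smul t x y := by
    show iwBr x (t • y) = t • iwBr x y
    have hs : ∀ (a : Iw) (j : Fin 6), (t • a) j = t * a j := fun _ _ => rfl
    funext i
    rw [hs]
    fin_cases i <;>
      simp only [iwBr, hs, vmk0, vmk1, vmk2, vmk3, vmk4, vmk5] <;> ring

/-- The coordinate functions on `Iw`, i.e. the dual basis `e¹, …, e⁶` (0-indexed). -/
def iwCoord (i : Fin 6) : Iw →ₗ[ℝ] ℝ where
  toFun x := x i
  map_add' _ _ := rfl
  map_smul' _ _ := rfl

/-- The dual basis 1-forms `e^i` on the Iwasawa Lie algebra. -/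
def iwE (i : Fin 6) : Form Iw 1 :=
  AlternatingMap.ofSubsingleton ℝ Iw ℝ (0 : Fin 1) (iwCoord i)

/-- The 2-forms `e^{ij} = e^i ∧ e^j` on the Iwasawa Lie algebra. -/
def iwE2 (i j : Fin 6) : Form Iw 2 := wedge (iwE i) (iwE j)

/-- The 3-forms `e^{ijk} = e^i ∧ e^j ∧ e^k` on the Iwasawa Lie algebra. -/
def iwE3 (i j k : Fin 6) : Form Iw 3 := wedge (wedge (iwE i) (iwE j)) (iwE k)

/-- `ω₀ = e¹² + e³⁴ + e⁵⁶` on the Iwasawa Lie algebra. -/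
def iwOm0 : Form Iw 2 := iwE2 0 1 + iwE2 2 3 + iwE2 4 5

/-- `ψ₊₀ = e¹³⁵ − e¹⁴⁶ − e²³⁶ − e²⁴⁵` on the Iwasawa Lie algebra. -/
def iwPsip0 : Form Iw 3 := iwE3 0 2 4 - iwE3 0 3 5 - iwE3 1 2 5 - iwE3 1 3 4

/-- `ψ₋₀ = e¹³⁶ + e¹⁴⁵ + e²³⁵ − e²⁴⁶` on the Iwasawa Lie algebra. -/
def iwPsim0 : Form Iw 3 := iwE3 0 2 5 + iwE3 0 3 4 + iwE3 1 2 4 - iwE3 1 3 5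

/-- `w₂ = −(4/3) e¹² − (4/3) e³⁴ + (8/3) e⁵⁶` on the Iwasawa Lie algebra. -/
def iwW2 : Form Iw 2 :=
  (-(4 : ℝ) / 3) • iwE2 0 1 + (-(4 : ℝ) / 3) • iwE2 2 3 + ((8 : ℝ) / 3) • iwE2 4 5

/-! All conditions are polynomial identities in the coordinates of `𝔦 = ℝ⁶`. Wedge products are
expanded over shuffles, and forms of degree 6 and 5 are compared on tuples of (all but one of) the
basis vectors. The almost complex structure is the standard one, `J e₁ = e₂, J e₃ = e₄,
J e₅ = e₆`: the endomorphism defined by `ψ₊₀` is `K = -2J`, so `λ(ψ₊₀) = -4` and `J_{ψ₊₀} = J`,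
and `ω₀(x, J y)` is the Euclidean inner product of `x` and `y`. -/

section Shuffles

open Equiv AlternatingMap
open scoped Nat

variable {V : Type*} [AddCommGroup V] [Module ℝ V] {k l : ℕ}

def shufflePerm {p : Fin (k + l) → Fin (k + l)} (hp : Function.Bijective p) :
    Perm (Fin k ⊕ Fin l) :=
  (finSumFinEquiv.trans (Equiv.ofBijective p hp)).trans finSumFinEquiv.symm

lemma sign_shufflePerm {p : Fin (k + l) → Fin (k + l)} (hp : Function.Bijective p) :
    Perm.sign (shufflePerm hp) = Perm.sign (Equiv.ofBijective p hp) :=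
  Perm.sign_symm_trans_trans _ finSumFinEquiv.symm

lemma lid_summand_shufflePerm (f : Form V k) (g : Form V l) {s : Fin k → Fin (k + l)}
    {t : Fin l → Fin (k + l)} (hst : Function.Bijective (Fin.append s t))
    (v : Fin (k + l) → V) :
    TensorProduct.lid ℝ ℝ (domCoprod.summand f g (Quotient.mk'' (shufflePerm hst))
        (v ∘ finSumFinEquiv))
      = (Perm.sign (Equiv.ofBijective _ hst) : ℤ) * (f (v ∘ s) * g (v ∘ t)) := by
  rw [domCoprod.summand_mk'', sign_shufflePerm, _root_.smul_apply,
    MultilinearMap.domDomCongr_apply, MultilinearMap.domCoprod_apply, Units.smul_def, map_zsmul,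
    TensorProduct.lid_tmul, smul_eq_mul, zsmul_eq_mul]
  simp [shufflePerm, Function.comp_def]

lemma card_modSumCongr :
    Nat.card (Perm.ModSumCongr (Fin k) (Fin l)) * (k ! * l !) = (k + l)! := by
  have h := Subgroup.card_eq_card_quotient_mul_card_subgroup
    (Perm.sumCongrHom (Fin k) (Fin l)).range
  rw [Nat.card_eq_fintype_card (α := (Perm.sumCongrHom (Fin k) (Fin l)).range),
    Perm.sumCongrHom.card_range, Nat.card_perm] at h
  simpa [Fintype.card_perm] using h.symm

/-- Shuffle expansion of a wedge product along an explicit list of shuffles: the `i`-th one sends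
the positions `s i` to the first factor and `t i` to the second, with sign `ε i`; `hinj` and
`hcard` say that every `(k, l)`-shuffle occurs exactly once. -/
theorem wedge_apply_eq_sum_shuffles {N : ℕ} (s : Fin N → Fin k → Fin (k + l))
    (t : Fin N → Fin l → Fin (k + l)) (ε : Fin N → ℤ)
    (hbij : ∀ i, Function.Bijective (Fin.append (s i) (t i)))
    (hsign : ∀ i, (Perm.sign (Equiv.ofBijective _ (hbij i)) : ℤ) = ε i)
    (hinj : Function.Injective fun i => Finset.univ.image (s i))
    (hcard : N * (k ! * l !) = (k + l)!)
    (f : Form V k) (g : Form V l) (v : Fin (k + l) → V) :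
    wedge f g v = ∑ i, ε i * (f (v ∘ s i) * g (v ∘ t i)) := by
  rw [wedge, domDomCongr_apply, LinearMap.compAlternatingMap_apply, domCoprod_apply,
    _root_.sum_apply, map_sum]
  refine (Fintype.sum_bijective (fun i => Quotient.mk'' (shufflePerm (hbij i))) ?_ _ _
    fun i => by rw [LinearEquiv.coe_coe, lid_summand_shufflePerm, hsign]).symm
  rw [Fintype.bijective_iff_injective_and_card]
  refine ⟨fun i j hij => hinj ?_, ?_⟩
  · obtain ⟨⟨σl, σr⟩, h⟩ := QuotientGroup.leftRel_apply.mp (Quotient.exact' hij)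
    have hs : s j = s i ∘ σl := by
      funext a
      have := congrArg (fun σ : Perm (Fin k ⊕ Fin l) => finSumFinEquiv (σ (Sum.inl a)))
        (eq_mul_of_inv_mul_eq h.symm)
      simpa [shufflePerm] using this
    simp only [hs, ← Finset.image_image, Finset.image_univ_of_surjective σl.surjective]
  · have hpos : 0 < k ! * l ! := Nat.mul_pos (Nat.factorial_pos k) (Nat.factorial_pos l)
    rw [Fintype.card_fin, ← Nat.card_eq_fintype_card]
    exact Nat.eq_of_mul_eq_mul_right hpos (hcard.trans card_modSumCongr.symm)

lemma comp_vecCons {α β : Type*} {n : ℕ} (v : α → β) (a : α) (u : Fin n → α) :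
    v ∘ Matrix.vecCons a u = Matrix.vecCons (v a) (v ∘ u) :=
  Fin.comp_cons v a u

lemma wedge_apply_one_one (f : Form V 1) (g : Form V 1) (v : Fin 2 → V) :
    wedge f g v =
      f ![v 0] * g ![v 1]
      - f ![v 1] * g ![v 0] := by
  rw [wedge_apply_eq_sum_shuffles
    ![![0], ![1]]
    ![![1], ![0]]
    ![1, -1]
    (by decide) (by decide) (by decide) (by decide)]
  simp only [Fin.sum_univ_succ, Fin.sum_univ_zero, comp_vecCons, Matrix.empty_eq,
    Matrix.cons_val_zero, Matrix.cons_val_succ, Int.cast_one, Int.cast_neg]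
  ring

lemma wedge_apply_two_one (f : Form V 2) (g : Form V 1) (v : Fin 3 → V) :
    wedge f g v =
      f ![v 0, v 1] * g ![v 2]
      - f ![v 0, v 2] * g ![v 1]
      + f ![v 1, v 2] * g ![v 0] := by
  rw [wedge_apply_eq_sum_shuffles
    ![![0, 1], ![0, 2], ![1, 2]]
    ![![2], ![1], ![0]]
    ![1, -1, 1]
    (by decide) (by decide) (by decide) (by decide)]
  simp only [Fin.sum_univ_succ, Fin.sum_univ_zero, comp_vecCons, Matrix.empty_eq,
    Matrix.cons_val_zero, Matrix.cons_val_succ, Int.cast_one, Int.cast_neg]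
  ring

lemma wedge_apply_two_two (f : Form V 2) (g : Form V 2) (v : Fin 4 → V) :
    wedge f g v =
      f ![v 0, v 1] * g ![v 2, v 3]
      - f ![v 0, v 2] * g ![v 1, v 3]
      + f ![v 0, v 3] * g ![v 1, v 2]
      + f ![v 1, v 2] * g ![v 0, v 3]
      - f ![v 1, v 3] * g ![v 0, v 2]
      + f ![v 2, v 3] * g ![v 0, v 1] := by
  rw [wedge_apply_eq_sum_shuffles
    ![![0, 1], ![0, 2], ![0, 3], ![1, 2], ![1, 3], ![2, 3]]
    ![![2, 3], ![1, 3], ![1, 2], ![0, 3], ![0, 2], ![0, 1]]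
    ![1, -1, 1, 1, -1, 1]
    (by decide) (by decide) (by decide) (by decide)]
  simp only [Fin.sum_univ_succ, Fin.sum_univ_zero, comp_vecCons, Matrix.empty_eq,
    Matrix.cons_val_zero, Matrix.cons_val_succ, Int.cast_one, Int.cast_neg]
  ring

lemma wedge_apply_two_three (f : Form V 2) (g : Form V 3) (v : Fin 5 → V) :
    wedge f g v =
      f ![v 0, v 1] * g ![v 2, v 3, v 4]
      - f ![v 0, v 2] * g ![v 1, v 3, v 4]
      + f ![v 0, v 3] * g ![v 1, v 2, v 4]
      - f ![v 0, v 4] * g ![v 1, v 2, v 3]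
      + f ![v 1, v 2] * g ![v 0, v 3, v 4]
      - f ![v 1, v 3] * g ![v 0, v 2, v 4]
      + f ![v 1, v 4] * g ![v 0, v 2, v 3]
      + f ![v 2, v 3] * g ![v 0, v 1, v 4]
      - f ![v 2, v 4] * g ![v 0, v 1, v 3]
      + f ![v 3, v 4] * g ![v 0, v 1, v 2] := by
  rw [wedge_apply_eq_sum_shuffles
    ![![0, 1], ![0, 2], ![0, 3], ![0, 4], ![1, 2], ![1, 3], ![1, 4], ![2, 3], ![2, 4], ![3, 4]]
    ![![2, 3, 4], ![1, 3, 4], ![1, 2, 4], ![1, 2, 3], ![0, 3, 4], ![0, 2, 4], ![0, 2, 3],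
      ![0, 1, 4], ![0, 1, 3], ![0, 1, 2]]
    ![1, -1, 1, -1, 1, -1, 1, 1, -1, 1]
    (by decide) (by decide) (by decide) (by decide)]
  simp only [Fin.sum_univ_succ, Fin.sum_univ_zero, comp_vecCons, Matrix.empty_eq,
    Matrix.cons_val_zero, Matrix.cons_val_succ, Int.cast_one, Int.cast_neg]
  ring

lemma wedge_apply_four_two (f : Form V 4) (g : Form V 2) (v : Fin 6 → V) :
    wedge f g v =
      f ![v 0, v 1, v 2, v 3] * g ![v 4, v 5]
      - f ![v 0, v 1, v 2, v 4] * g ![v 3, v 5]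
      + f ![v 0, v 1, v 2, v 5] * g ![v 3, v 4]
      + f ![v 0, v 1, v 3, v 4] * g ![v 2, v 5]
      - f ![v 0, v 1, v 3, v 5] * g ![v 2, v 4]
      + f ![v 0, v 1, v 4, v 5] * g ![v 2, v 3]
      - f ![v 0, v 2, v 3, v 4] * g ![v 1, v 5]
      + f ![v 0, v 2, v 3, v 5] * g ![v 1, v 4]
      - f ![v 0, v 2, v 4, v 5] * g ![v 1, v 3]
      + f ![v 0, v 3, v 4, v 5] * g ![v 1, v 2]
      + f ![v 1, v 2, v 3, v 4] * g ![v 0, v 5]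
      - f ![v 1, v 2, v 3, v 5] * g ![v 0, v 4]
      + f ![v 1, v 2, v 4, v 5] * g ![v 0, v 3]
      - f ![v 1, v 3, v 4, v 5] * g ![v 0, v 2]
      + f ![v 2, v 3, v 4, v 5] * g ![v 0, v 1] := by
  rw [wedge_apply_eq_sum_shuffles
    ![![0, 1, 2, 3], ![0, 1, 2, 4], ![0, 1, 2, 5], ![0, 1, 3, 4], ![0, 1, 3, 5], ![0, 1, 4, 5],
      ![0, 2, 3, 4], ![0, 2, 3, 5], ![0, 2, 4, 5], ![0, 3, 4, 5], ![1, 2, 3, 4], ![1, 2, 3, 5],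
      ![1, 2, 4, 5], ![1, 3, 4, 5], ![2, 3, 4, 5]]
    ![![4, 5], ![3, 5], ![3, 4], ![2, 5], ![2, 4], ![2, 3], ![1, 5], ![1, 4], ![1, 3], ![1, 2],
      ![0, 5], ![0, 4], ![0, 3], ![0, 2], ![0, 1]]
    ![1, -1, 1, 1, -1, 1, -1, 1, -1, 1, 1, -1, 1, -1, 1]
    (by decide) (by decide) (by decide) (by decide)]
  simp only [Fin.sum_univ_succ, Fin.sum_univ_zero, comp_vecCons, Matrix.empty_eq,
    Matrix.cons_val_zero, Matrix.cons_val_succ, Int.cast_one, Int.cast_neg]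
  ring

lemma wedge_apply_three_three (f : Form V 3) (g : Form V 3) (v : Fin 6 → V) :
    wedge f g v =
      f ![v 0, v 1, v 2] * g ![v 3, v 4, v 5]
      - f ![v 0, v 1, v 3] * g ![v 2, v 4, v 5]
      + f ![v 0, v 1, v 4] * g ![v 2, v 3, v 5]
      - f ![v 0, v 1, v 5] * g ![v 2, v 3, v 4]
      + f ![v 0, v 2, v 3] * g ![v 1, v 4, v 5]
      - f ![v 0, v 2, v 4] * g ![v 1, v 3, v 5]
      + f ![v 0, v 2, v 5] * g ![v 1, v 3, v 4]
      + f ![v 0, v 3, v 4] * g ![v 1, v 2, v 5]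
      - f ![v 0, v 3, v 5] * g ![v 1, v 2, v 4]
      + f ![v 0, v 4, v 5] * g ![v 1, v 2, v 3]
      - f ![v 1, v 2, v 3] * g ![v 0, v 4, v 5]
      + f ![v 1, v 2, v 4] * g ![v 0, v 3, v 5]
      - f ![v 1, v 2, v 5] * g ![v 0, v 3, v 4]
      - f ![v 1, v 3, v 4] * g ![v 0, v 2, v 5]
      + f ![v 1, v 3, v 5] * g ![v 0, v 2, v 4]
      - f ![v 1, v 4, v 5] * g ![v 0, v 2, v 3]
      + f ![v 2, v 3, v 4] * g ![v 0, v 1, v 5]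
      - f ![v 2, v 3, v 5] * g ![v 0, v 1, v 4]
      + f ![v 2, v 4, v 5] * g ![v 0, v 1, v 3]
      - f ![v 3, v 4, v 5] * g ![v 0, v 1, v 2] := by
  rw [wedge_apply_eq_sum_shuffles
    ![![0, 1, 2], ![0, 1, 3], ![0, 1, 4], ![0, 1, 5], ![0, 2, 3], ![0, 2, 4], ![0, 2, 5],
      ![0, 3, 4], ![0, 3, 5], ![0, 4, 5], ![1, 2, 3], ![1, 2, 4], ![1, 2, 5], ![1, 3, 4],
      ![1, 3, 5], ![1, 4, 5], ![2, 3, 4], ![2, 3, 5], ![2, 4, 5], ![3, 4, 5]]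
    ![![3, 4, 5], ![2, 4, 5], ![2, 3, 5], ![2, 3, 4], ![1, 4, 5], ![1, 3, 5], ![1, 3, 4],
      ![1, 2, 5], ![1, 2, 4], ![1, 2, 3], ![0, 4, 5], ![0, 3, 5], ![0, 3, 4], ![0, 2, 5],
      ![0, 2, 4], ![0, 2, 3], ![0, 1, 5], ![0, 1, 4], ![0, 1, 3], ![0, 1, 2]]
    ![1, -1, 1, -1, 1, -1, 1, 1, -1, 1, -1, 1, -1, -1, 1, -1, 1, -1, 1, -1]
    (by decide) (by decide) (by decide) (by decide)]
  simp only [Fin.sum_univ_succ, Fin.sum_univ_zero, comp_vecCons, Matrix.empty_eq,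
    Matrix.cons_val_zero, Matrix.cons_val_succ, Int.cast_one, Int.cast_neg]
  ring

end Shuffles

section AlternatingExt

variable {R M N : Type*} [CommRing R] [AddCommGroup M] [Module R M] [AddCommGroup N] [Module R N]

theorem AlternatingMap.eq_of_apply_basis_eq {ι : Type*} [Fintype ι] [DecidableEq ι]
    (e : Module.Basis ι R M) {f g : M [⋀^ι]→ₗ[R] R} (h : f e = g e) : f = g := by
  rw [f.eq_smul_basis_det e, g.eq_smul_basis_det e, h]

theorem Module.Basis.ext_alternating_succAbove {ι : Type*} {n : ℕ} (e : Module.Basis ι R M)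
    (σ : Fin (n + 1) ≃ ι) {f g : M [⋀^Fin n]→ₗ[R] N}
    (h : ∀ m : Fin (n + 1),
      (f fun j => e (σ (m.succAbove j))) = g fun j => e (σ (m.succAbove j))) :
    f = g := by
  refine (e.reindex σ.symm).ext_alternating fun v hv => ?_
  simp only [Module.Basis.reindex_apply, Equiv.symm_symm]
  obtain ⟨m, hm⟩ : ∃ m, m ∉ Set.range v := by
    by_contra! hsurj
    have := Fintype.card_le_of_surjective v hsurj
    simp at this
  have hrange : ∀ i, v i ∈ Set.range m.succAbove := fun i => by
    rw [Fin.range_succAbove]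
    exact fun hi => hm ⟨i, hi⟩
  choose w hw using hrange
  have hw_inj : Function.Injective w := fun i j hij => hv (by rw [← hw i, ← hw j, hij])
  let τ := Equiv.ofBijective w (Finite.injective_iff_bijective.mp hw_inj)
  have hv_eq : (fun i => e (σ (v i))) = (fun j => e (σ (m.succAbove j))) ∘ τ :=
    funext fun i => by simp [τ, hw]
  rw [hv_eq, f.map_perm, g.map_perm, h]

end AlternatingExt

section AlmostComplex

variable {V : Type*} [AddCommGroup V] [Module ℝ V] [Module.Free ℝ V] [Module.Finite ℝ V]
  {J : V →ₗ[ℝ] V}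

lemma lamOf_smul_of_comp_self_eq_neg_id (hJ : J ∘ₗ J = -LinearMap.id) (c : ℝ) :
    lamOf (c • J) = -(c ^ 2 * Module.finrank ℝ V) / 6 := by
  rw [lamOf, LinearMap.smul_comp, LinearMap.comp_smul, hJ, smul_smul, map_smul, map_neg,
    LinearMap.trace_id, smul_eq_mul]
  ring

lemma Jof_smul_of_comp_self_eq_neg_id (hJ : J ∘ₗ J = -LinearMap.id)
    (hV : Module.finrank ℝ V = 6) {c : ℝ} (hc : c < 0) : Jof (c • J) = J := by
  have hsqrt : Real.sqrt (-lamOf (c • J)) = -c := by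
    rw [lamOf_smul_of_comp_self_eq_neg_id hJ, hV, Nat.cast_ofNat,
      show -(-(c ^ 2 * 6) / 6) = (-c) ^ 2 by ring, Real.sqrt_sq (by linarith)]
  rw [Jof, hsqrt, smul_smul, inv_neg, neg_neg, inv_mul_cancel₀ hc.ne, one_smul]

end AlmostComplex

section Iwasawa

lemma iw_lie_apply (x y : Iw) (i : Fin 6) : ⁅x, y⁆ i = ![0, 0, 0, 0,
    -(x 0 * y 3 - x 3 * y 0) - (x 1 * y 2 - x 2 * y 1),
    -(x 0 * y 2 - x 2 * y 0) + (x 1 * y 3 - x 3 * y 1)] i := rfl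

lemma iwE_apply (i : Fin 6) (x : Iw) : iwE i ![x] = x i := rfl

lemma iwE2_apply (i j : Fin 6) (x y : Iw) : iwE2 i j ![x, y] = x i * y j - y i * x j := by
  simp [iwE2, wedge_apply_one_one, iwE_apply]

lemma iwE3_apply (i j k : Fin 6) (x y z : Iw) : iwE3 i j k ![x, y, z] =
    (x i * y j - y i * x j) * z k - (x i * z j - z i * x j) * y k
      + (y i * z j - z i * y j) * x k := by
  simp [iwE3, wedge_apply_two_one, wedge_apply_one_one, iwE_apply]

def iwBasis : Module.Basis (Fin 6) ℝ Iw := Pi.basisFun ℝ (Fin 6)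

lemma iwBasis_apply (i j : Fin 6) : iwBasis i j = if j = i then 1 else 0 := by
  rw [iwBasis, ← Pi.single_apply]
  exact congrFun (Pi.basisFun_apply ℝ (Fin 6) i) j

instance : Module.Free ℝ Iw := Module.Free.of_basis iwBasis

instance : Module.Finite ℝ Iw := Module.Finite.of_basis iwBasis

lemma finrank_iw : Module.finrank ℝ Iw = 6 := by
  simp [Module.finrank_eq_card_basis iwBasis]

def iwJ : Iw →ₗ[ℝ] Iw :=
  LinearMap.pi ![-iwCoord 1, iwCoord 0, -iwCoord 3, iwCoord 2, -iwCoord 5, iwCoord 4]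

lemma iwJ_apply (x : Iw) (i : Fin 6) : iwJ x i = ![-x 1, x 0, -x 3, x 2, -x 5, x 4] i := by
  fin_cases i <;> rfl

-- `LinearMap.smul_apply` and `Pi.smul_apply` do not see through the type synonym `Iw`.
lemma smul_iwJ_apply (c : ℝ) (x : Iw) (i : Fin 6) : (c • iwJ) x i = c * iwJ x i := rfl

lemma iwJ_comp_iwJ : iwJ ∘ₗ iwJ = -LinearMap.id :=
  LinearMap.ext fun x => funext fun i => by
    show iwJ (iwJ x) i = -x i
    fin_cases i <;> simp [iwJ_apply]

lemma lamOf_neg_two_smul_iwJ : lamOf ((-2 : ℝ) • iwJ) = -4 := by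
  rw [lamOf_smul_of_comp_self_eq_neg_id iwJ_comp_iwJ, finrank_iw]
  norm_num

lemma iwOm0_apply_iwJ (x y : Iw) : iwOm0 ![x, iwJ y] = ∑ i, x i * y i := by
  simp only [iwOm0, AlternatingMap.add_apply, iwE2_apply, iwJ_apply, Fin.sum_univ_six,
    Fin.isValue, Matrix.cons_val_zero, Matrix.cons_val_one, Matrix.cons_val]
  ring

lemma iwPsim0_apply (x y z : Iw) : iwPsim0 ![x, y, z] = -iwPsip0 ![iwJ x, y, z] := by
  simp only [iwPsim0, iwPsip0, AlternatingMap.add_apply, AlternatingMap.sub_apply, iwE3_apply,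
    iwJ_apply, Fin.isValue, Matrix.cons_val_zero, Matrix.cons_val_one, Matrix.cons_val]
  ring

lemma iwW2_apply_iwJ (x y : Iw) : iwW2 ![iwJ x, iwJ y] = iwW2 ![x, y] := by
  simp only [iwW2, AlternatingMap.add_apply, AlternatingMap.smul_apply, iwE2_apply, iwJ_apply,
    smul_eq_mul, Fin.isValue, Matrix.cons_val_zero, Matrix.cons_val_one, Matrix.cons_val]
  ring

lemma iwOm0_apply_iwJ_self_pos (x : Iw) (hx : x ≠ 0) : 0 < iwOm0 ![x, iwJ x] := by
  obtain ⟨i, hi⟩ : ∃ i, x i ≠ 0 := by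
    by_contra! h
    exact hx (funext h)
  rw [iwOm0_apply_iwJ]
  exact Finset.sum_pos' (fun j _ => mul_self_nonneg (x j))
    ⟨i, Finset.mem_univ _, mul_self_pos.mpr hi⟩

lemma d2_iwOm0 (x y z : Iw) : d2 iwOm0 x y z = -1 * iwPsip0 ![x, y, z] := by
  simp only [d2, iwOm0, iwPsip0, AlternatingMap.add_apply, AlternatingMap.sub_apply, iwE2_apply,
    iwE3_apply, iw_lie_apply, Fin.isValue, Matrix.cons_val_zero, Matrix.cons_val_one,
    Matrix.cons_val]
  ring

lemma d2_iwW2 (x y z : Iw) : d2 iwW2 x y z = (-(8 : ℝ) / 3) * iwPsip0 ![x, y, z] := by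
  simp only [d2, iwW2, iwPsip0, AlternatingMap.add_apply, AlternatingMap.sub_apply,
    AlternatingMap.smul_apply, iwE2_apply, iwE3_apply, iw_lie_apply, smul_eq_mul,
    Fin.isValue, Matrix.cons_val_zero, Matrix.cons_val_one, Matrix.cons_val]
  ring

lemma d3_iwPsim0 (x y z w : Iw) : d3 iwPsim0 x y z w
    = -(2 / 3 : ℝ) * (-1) * wedge iwOm0 iwOm0 ![x, y, z, w] - wedge iwW2 iwOm0 ![x, y, z, w] := by
  simp only [d3, wedge_apply_two_two, iwPsim0, iwOm0, iwW2, AlternatingMap.add_apply,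
    AlternatingMap.sub_apply, AlternatingMap.smul_apply, iwE2_apply, iwE3_apply, iw_lie_apply,
    smul_eq_mul, Fin.isValue, Matrix.cons_val_zero, Matrix.cons_val_one, Matrix.cons_val]
  ring

lemma iwOm0_cube_apply_basis : wedge (wedge iwOm0 iwOm0) iwOm0 iwBasis = 6 := by
  simp only [wedge_apply_four_two, wedge_apply_two_two, iwOm0, AlternatingMap.add_apply,
    iwE2_apply, Fin.isValue, Matrix.cons_val_zero, Matrix.cons_val_one, Matrix.cons_val,
    iwBasis_apply, Fin.reduceEq, ↓reduceIte]
  norm_num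

lemma iwPsip0_wedge_iwPsim0_apply_basis : wedge iwPsip0 iwPsim0 iwBasis = 4 := by
  simp only [wedge_apply_three_three, iwPsip0, iwPsim0, AlternatingMap.add_apply,
    AlternatingMap.sub_apply, iwE3_apply, Fin.isValue, iwBasis_apply, Fin.reduceEq, ↓reduceIte]
  norm_num

lemma iwW2_wedge_iwOm0_wedge_iwOm0_apply_basis :
    wedge (wedge iwW2 iwOm0) iwOm0 iwBasis = 0 := by
  simp only [wedge_apply_four_two, wedge_apply_two_two, iwW2, iwOm0, AlternatingMap.add_apply,
    AlternatingMap.smul_apply, iwE2_apply, smul_eq_mul, Fin.isValue, Matrix.cons_val_zero,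
    Matrix.cons_val_one, Matrix.cons_val, iwBasis_apply, Fin.reduceEq, ↓reduceIte]
  norm_num

lemma iwOm0_wedge_iwPsip0 : wedge iwOm0 iwPsip0 = 0 := by
  refine iwBasis.ext_alternating_succAbove (Equiv.refl _) fun m => ?_
  fin_cases m <;>
  -- `decide` settles the index comparisons `j = m.succAbove i` left by `iwBasis_apply`.
  · simp +decide only [wedge_apply_two_three, AlternatingMap.zero_apply, iwOm0, iwPsip0,
      AlternatingMap.add_apply, AlternatingMap.sub_apply, iwE2_apply, iwE3_apply, Equiv.refl_apply,
      iwBasis_apply, Fin.isValue, ↓reduceIte]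
    norm_num

lemma isKOf_iwOm0_iwPsip0 : IsKOf iwOm0 iwPsip0 ((-2 : ℝ) • iwJ) := fun v => by
  refine iwBasis.ext_alternating_succAbove (Equiv.refl _) fun m => ?_
  fin_cases m <;>
  · simp only [AlternatingMap.curryLeft_apply_apply, AlternatingMap.smul_apply,
      wedge_apply_four_two, wedge_apply_two_two, wedge_apply_two_three, iwOm0, iwPsip0,
      AlternatingMap.add_apply, AlternatingMap.sub_apply, iwE2_apply, iwE3_apply,
      Matrix.cons_val_zero, smul_iwJ_apply]
    simp +decide only [iwJ_apply, Equiv.refl_apply, iwBasis_apply, Fin.isValue,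
      Matrix.cons_val_zero, Matrix.cons_val_one, Matrix.cons_val, ↓reduceIte]
    ring

end Iwasawa

theorem statement9 :
    ∃ J : Iw →ₗ[ℝ] Iw,
      IsCoupledSU3 iwOm0 iwPsip0 iwPsim0 J (-1) ∧
      IsTorsionForm iwOm0 iwPsip0 iwPsim0 J (-1) iwW2 ∧
      (∀ x y z : Iw, d2 iwW2 x y z = (-(8 : ℝ) / 3) * iwPsip0 ![x, y, z]) := by
  have hJ : ∃ K, IsKOf iwOm0 iwPsip0 K ∧ lamOf K < 0 ∧ iwJ = Jof K :=
    ⟨(-2 : ℝ) • iwJ, isKOf_iwOm0_iwPsip0, by rw [lamOf_neg_two_smul_iwJ]; norm_num,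
      (Jof_smul_of_comp_self_eq_neg_id iwJ_comp_iwJ finrank_iw (by norm_num)).symm⟩
  have hsymm (x y : Iw) : iwOm0 ![x, iwJ y] = iwOm0 ![y, iwJ x] := by
    simp only [iwOm0_apply_iwJ, mul_comm]
  refine ⟨iwJ, ⟨⟨?vol, hJ, iwPsim0_apply, iwOm0_wedge_iwPsip0, hsymm, iwOm0_apply_iwJ_self_pos,
    ?normalized⟩, by norm_num, d2_iwOm0⟩, ⟨?primitive, iwW2_apply_iwJ, d3_iwPsim0⟩, d2_iwW2⟩
  case vol =>
    intro h
    simpa [h] using iwOm0_cube_apply_basis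
  case normalized =>
    refine AlternatingMap.eq_of_apply_basis_eq iwBasis ?_
    rw [AlternatingMap.smul_apply, iwOm0_cube_apply_basis, iwPsip0_wedge_iwPsim0_apply_basis]
    norm_num
  case primitive =>
    refine AlternatingMap.eq_of_apply_basis_eq iwBasis ?_
    rw [iwW2_wedge_iwOm0_wedge_iwOm0_apply_basis, AlternatingMap.zero_apply]
end
end
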